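/- For every s < 0, the Gaussian tail integral satisfies the two-sided bound ((1 + 5/(2s²))/(1 + 3/s² + 3/(4s⁴))) · e^{−s²}/(2|s|) ≤ I_0(s) ≤ ((1 + 9/(2s²) + 2/s⁴)/(1 + 5/s² + 15/(4s⁴))) · e^{−s²}/(2|s|). -/

import Mathlib

/-!
With `t = -s` one has `I₀(s) = ∫_t^∞ e^{-x²} dx`. If `R' = 2xR - m` and `R` is bounded at
infinity, then `-R e^{-x²}` is an antiderivative of `m e^{-x²}`, so
`∫_t^∞ m e^{-x²} = R(t) e^{-t²}`; comparing `m` with `1` bounds the tail. The two rational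
functions `R` used are half of consecutive convergents of Laplace's continued fraction
`√π e^{x²} erfc x = 1/(x + (1/2)/(x + 1/(x + (3/2)/(x + 2/(x + ⋯)))))`; for them
`m = 1 - 24/Q²` and `m = 1 + 60/Q²`, where `Q` is the denominator of `R`.
-/

open MeasureTheory Real

noncomputable def In (n : ℕ) (s : ℝ) : ℝ :=
  ∫ z in Set.Ioi (0 : ℝ), z ^ n * Real.exp (-(z - s) ^ 2)

open Set Filter Topology

theorem In_eq_integral_Ioi (n : ℕ) (s : ℝ) :
    In n s = ∫ x in Ioi (-s), (x + s) ^ n * exp (-x ^ 2) := by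
  have hpre : (· - s) ⁻¹' Ioi (-s) = Ioi 0 := by
    ext x
    simp only [mem_preimage, mem_Ioi, neg_lt_sub_iff_lt_add, lt_add_iff_pos_right]
  rw [← (measurePreserving_sub_right volume s).setIntegral_preimage_emb
    (MeasurableEquiv.subRight s).measurableEmbedding, hpre, In]
  simp_rw [sub_add_cancel]

theorem integrable_exp_neg_sq : Integrable fun x : ℝ => exp (-x ^ 2) := by
  simpa using integrable_exp_neg_mul_sq one_pos

theorem integrableOn_mul_exp_neg_sq {m : ℝ → ℝ} {s : Set ℝ} {C : ℝ} (hs : MeasurableSet s)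
    (hm : ContinuousOn m s) (hC : ∀ x ∈ s, |m x| ≤ C) :
    IntegrableOn (fun x => m x * exp (-x ^ 2)) s :=
  integrable_exp_neg_sq.integrableOn.bdd_mul (hm.aestronglyMeasurable hs)
    ((ae_restrict_iff' hs).2 (ae_of_all _ hC))

theorem tendsto_mul_exp_neg_sq_atTop {R : ℝ → ℝ}
    (hR : IsBoundedUnder (· ≤ ·) atTop fun x => |R x|) :
    Tendsto (fun x => R x * exp (-x ^ 2)) atTop (𝓝 0) :=
  isBoundedUnder_le_mul_tendsto_zero hR <|
    tendsto_exp_neg_atTop_nhds_zero.comp (tendsto_pow_atTop two_ne_zero)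

section TailComparison

variable {R m : ℝ → ℝ} {t : ℝ}

theorem integral_Ioi_mul_exp_neg_sq (hR : ∀ x ∈ Ici t, HasDerivAt R (2 * x * R x - m x) x)
    (hRbdd : IsBoundedUnder (· ≤ ·) atTop fun x => |R x|)
    (hm : IntegrableOn (fun x => m x * exp (-x ^ 2)) (Ioi t)) :
    ∫ x in Ioi t, m x * exp (-x ^ 2) = R t * exp (-t ^ 2) := by
  have hG : ∀ x ∈ Ici t,
      HasDerivAt (fun y => -(R y * exp (-y ^ 2))) (m x * exp (-x ^ 2)) x := by
    intro x hx
    have hexp : HasDerivAt (fun y => exp (-y ^ 2)) (-(2 * x) * exp (-x ^ 2)) x := by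
      simpa [mul_comm] using ((hasDerivAt_pow 2 x).neg).exp
    exact ((hR x hx).mul hexp).neg.congr_deriv (by ring)
  rw [integral_Ioi_of_hasDerivAt_of_tendsto' hG hm (tendsto_mul_exp_neg_sq_atTop hRbdd).neg]
  simp

theorem le_integral_Ioi_exp_neg_sq (hR : ∀ x ∈ Ici t, HasDerivAt R (2 * x * R x - m x) x)
    (hRbdd : IsBoundedUnder (· ≤ ·) atTop fun x => |R x|)
    (hm : IntegrableOn (fun x => m x * exp (-x ^ 2)) (Ioi t)) (hm_le : ∀ x ∈ Ioi t, m x ≤ 1) :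
    R t * exp (-t ^ 2) ≤ ∫ x in Ioi t, exp (-x ^ 2) := by
  rw [← integral_Ioi_mul_exp_neg_sq hR hRbdd hm]
  exact setIntegral_mono_on hm integrable_exp_neg_sq.integrableOn measurableSet_Ioi
    fun x hx => mul_le_of_le_one_left (exp_pos _).le (hm_le x hx)

theorem integral_Ioi_exp_neg_sq_le (hR : ∀ x ∈ Ici t, HasDerivAt R (2 * x * R x - m x) x)
    (hRbdd : IsBoundedUnder (· ≤ ·) atTop fun x => |R x|)
    (hm : IntegrableOn (fun x => m x * exp (-x ^ 2)) (Ioi t)) (hm_ge : ∀ x ∈ Ioi t, 1 ≤ m x) :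
    ∫ x in Ioi t, exp (-x ^ 2) ≤ R t * exp (-t ^ 2) := by
  rw [← integral_Ioi_mul_exp_neg_sq hR hRbdd hm]
  exact setIntegral_mono_on integrable_exp_neg_sq.integrableOn hm measurableSet_Ioi
    fun x hx => le_mul_of_one_le_left (exp_pos _).le (hm_ge x hx)

end TailComparison

noncomputable def gaussTailLower (x : ℝ) : ℝ :=
  (2 * x ^ 3 + 5 * x) / (4 * x ^ 4 + 12 * x ^ 2 + 3)

noncomputable def gaussTailUpper (x : ℝ) : ℝ :=
  (2 * x ^ 4 + 9 * x ^ 2 + 4) / (4 * x ^ 5 + 20 * x ^ 3 + 15 * x)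

theorem hasDerivAt_gaussTailLower (x : ℝ) :
    HasDerivAt gaussTailLower
      (2 * x * gaussTailLower x - (1 - 24 / (4 * x ^ 4 + 12 * x ^ 2 + 3) ^ 2)) x := by
  have hQ : 4 * x ^ 4 + 12 * x ^ 2 + 3 ≠ 0 := by positivity
  have hP' : HasDerivAt (fun y => 2 * y ^ 3 + 5 * y) (6 * x ^ 2 + 5) x :=
    (((hasDerivAt_pow 3 x).const_mul 2).add ((hasDerivAt_id x).const_mul 5)).congr_deriv
      (by norm_num; ring)
  have hQ' : HasDerivAt (fun y => 4 * y ^ 4 + 12 * y ^ 2 + 3) (16 * x ^ 3 + 24 * x) x :=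
    ((((hasDerivAt_pow 4 x).const_mul 4).add ((hasDerivAt_pow 2 x).const_mul 12)).add_const
      3).congr_deriv (by norm_num; ring)
  refine (hP'.div hQ' hQ).congr_deriv ?_
  unfold gaussTailLower
  field_simp
  ring

theorem hasDerivAt_gaussTailUpper {x : ℝ} (hx : 0 < x) :
    HasDerivAt gaussTailUpper
      (2 * x * gaussTailUpper x - (1 + 60 / (4 * x ^ 5 + 20 * x ^ 3 + 15 * x) ^ 2)) x := by
  have hQ : 4 * x ^ 5 + 20 * x ^ 3 + 15 * x ≠ 0 := by positivity
  have hP' : HasDerivAt (fun y => 2 * y ^ 4 + 9 * y ^ 2 + 4) (8 * x ^ 3 + 18 * x) x :=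
    ((((hasDerivAt_pow 4 x).const_mul 2).add ((hasDerivAt_pow 2 x).const_mul 9)).add_const
      4).congr_deriv (by norm_num; ring)
  have hQ' : HasDerivAt (fun y => 4 * y ^ 5 + 20 * y ^ 3 + 15 * y)
      (20 * x ^ 4 + 60 * x ^ 2 + 15) x :=
    ((((hasDerivAt_pow 5 x).const_mul 4).add ((hasDerivAt_pow 3 x).const_mul 20)).add
      ((hasDerivAt_id x).const_mul 15)).congr_deriv (by norm_num; ring)
  refine (hP'.div hQ' hQ).congr_deriv ?_
  unfold gaussTailUpper
  field_simp
  ring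

theorem abs_gaussTailLower_le_one {x : ℝ} (hx : 1 ≤ x) : |gaussTailLower x| ≤ 1 := by
  have hx3 : x ^ 3 ≤ x ^ 4 := pow_le_pow_right₀ hx (by norm_num)
  rw [gaussTailLower, abs_of_nonneg (by positivity), div_le_one (by positivity)]
  nlinarith

theorem abs_gaussTailUpper_le_one {x : ℝ} (hx : 1 ≤ x) : |gaussTailUpper x| ≤ 1 := by
  have hx0 : 0 < x := zero_lt_one.trans_le hx
  have hx4 : x ^ 4 ≤ x ^ 5 := pow_le_pow_right₀ hx (by norm_num)
  have hx2 : x ^ 2 ≤ x ^ 3 := pow_le_pow_right₀ hx (by norm_num)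
  rw [gaussTailUpper, abs_of_nonneg (by positivity), div_le_one (by positivity)]
  nlinarith

theorem gaussTailLower_mul_exp_le_integral (t : ℝ) :
    gaussTailLower t * exp (-t ^ 2) ≤ ∫ x in Ioi t, exp (-x ^ 2) := by
  refine le_integral_Ioi_exp_neg_sq (fun x _ => hasDerivAt_gaussTailLower x)
    (isBoundedUnder_of_eventually_le <|
      (eventually_ge_atTop 1).mono fun _ => abs_gaussTailLower_le_one)
    (integrableOn_mul_exp_neg_sq (C := 2) measurableSet_Ioi
      (Continuous.continuousOn (by fun_prop (disch := intro; positivity))) fun x _ => ?_)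
    fun x _ => ?_
  all_goals have hε : 0 ≤ 24 / (4 * x ^ 4 + 12 * x ^ 2 + 3) ^ 2 := by positivity
  · have hQ : 3 ≤ 4 * x ^ 4 + 12 * x ^ 2 + 3 := le_add_of_nonneg_left (by positivity)
    have hε_le : 24 / (4 * x ^ 4 + 12 * x ^ 2 + 3) ^ 2 ≤ 24 / 3 ^ 2 := by gcongr
    rw [abs_le]
    constructor <;> linarith
  · linarith

theorem integral_le_gaussTailUpper_mul_exp {t : ℝ} (ht : 0 < t) :
    ∫ x in Ioi t, exp (-x ^ 2) ≤ gaussTailUpper t * exp (-t ^ 2) := by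
  refine integral_Ioi_exp_neg_sq_le (fun x hx => hasDerivAt_gaussTailUpper (ht.trans_le hx))
    (isBoundedUnder_of_eventually_le <|
      (eventually_ge_atTop 1).mono fun _ => abs_gaussTailUpper_le_one)
    (integrableOn_mul_exp_neg_sq (C := 1 + 60 / (15 * t) ^ 2) measurableSet_Ioi
      (continuousOn_const.add (continuousOn_const.div (by fun_prop)
        fun x hx => by have : 0 < x := ht.trans hx; positivity)) fun x hx => ?_)
    fun x hx => ?_
  all_goals
    have htx : t < x := hx
    have hx0 : 0 < x := ht.trans htx
    have hε : 0 ≤ 60 / (4 * x ^ 5 + 20 * x ^ 3 + 15 * x) ^ 2 := by positivity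
  · have hQ : 15 * t ≤ 4 * x ^ 5 + 20 * x ^ 3 + 15 * x := by
      nlinarith [pow_pos hx0 5, pow_pos hx0 3]
    have hε_le : 60 / (4 * x ^ 5 + 20 * x ^ 3 + 15 * x) ^ 2 ≤ 60 / (15 * t) ^ 2 := by gcongr
    rw [abs_le]
    constructor <;> linarith
  · linarith

theorem In_zero_tail_bounds (s : ℝ) (hs : s < 0) :
    (1 + 5 / (2 * s ^ 2)) / (1 + 3 / s ^ 2 + 3 / (4 * s ^ 4))
        * (Real.exp (-s ^ 2) / (2 * |s|)) ≤ In 0 s ∧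
    In 0 s ≤ (1 + 9 / (2 * s ^ 2) + 2 / s ^ 4) / (1 + 5 / s ^ 2 + 15 / (4 * s ^ 4))
        * (Real.exp (-s ^ 2) / (2 * |s|)) := by
  obtain ⟨t, ht, rfl⟩ : ∃ t, 0 < t ∧ s = -t := ⟨-s, neg_pos.2 hs, (neg_neg s).symm⟩
  rw [In_eq_integral_Ioi, abs_neg, abs_of_pos ht, neg_neg, neg_sq]
  simp only [pow_zero, one_mul]
  constructor
  · convert gaussTailLower_mul_exp_le_integral t using 1
    rw [gaussTailLower]
    field_simp
    ring
  · convert integral_le_gaussTailUpper_mul_exp ht using 1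
    rw [gaussTailUpper]
    field_simp
    ring
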